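/- arXiv:1001.2860 — 6 statements merged into one kernel-verified Lean document; each statement's English description precedes it below -/
import Mathlib

section
/- Let Σ be a linearly ordered alphabet and let ≤_slex denote the suffix-lexicographic order on strings over Σ. If a string u is a suffix of both strings v₁ and v₂, and w is a string with v₁ ≤_slex w and w ≤_slex v₂, then u is a suffix of w. (The strings having a fixed suffix u form an interval in the suffix-lexicographic order.) -/
/-- The suffix-lexicographic (strict) order on strings over a linearly ordered
alphabet: `p <_slex q` iff the reversal of `p` is lexicographically smaller than the
reversal of `q` (where a proper prefix of a list precedes the list). -/
def SLex {α : Type*} [LinearOrder α] (p q : List α) : Prop :=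
  List.Lex (· < ·) p.reverse q.reverse

/-- The reflexive suffix-lexicographic order. -/
def SLexLe {α : Type*} [LinearOrder α] (p q : List α) : Prop :=
  SLex p q ∨ p = q

/-!
Reversal turns suffixes into prefixes and `≤_slex` into the lexicographic order. If `a ≤ c ≤ b`
lexicographically and `a`, `b` both start with `p`, then `c` starts with `p`: the first position
where `c` left `p` would carry letters `x < y < x`, or `x < x`.
-/

namespace List

variable {α : Type*} {r : α → α → Prop}

theorem IsPrefix.of_lex_of_lex [Std.Asymm r] {p a b c : List α} (ha : p <+: a) (hb : p <+: b)
    (hac : Lex r a c) (hcb : Lex r c b) : p <+: c := by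
  induction p generalizing a b c with
  | nil => exact c.nil_prefix
  | cons x p ih =>
    obtain ⟨a, rfl⟩ := ha
    obtain ⟨b, rfl⟩ := hb
    cases hac with
    | cons hac =>
      cases hcb with
      | cons hcb =>
        exact cons_prefix_cons.mpr ⟨rfl, ih (prefix_append p a) (prefix_append p b) hac hcb⟩
      | rel hxx => exact absurd hxx (Std.Irrefl.irrefl x)
    | rel hxy =>
      cases hcb with
      | cons => exact absurd hxy (Std.Irrefl.irrefl x)
      | rel hyx => exact absurd hyx (Std.Asymm.asymm _ _ hxy)

end List

/-- The strings having a fixed suffix `u` form an interval in the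
suffix-lexicographic order: if `u` is a suffix of both `v₁` and `v₂` and
`v₁ ≤_slex w ≤_slex v₂`, then `u` is a suffix of `w`. -/
theorem suffix_interval_in_slex {α : Type*} [LinearOrder α]
    (u v₁ v₂ w : List α) (h₁ : u <:+ v₁) (h₂ : u <:+ v₂)
    (hw₁ : SLexLe v₁ w) (hw₂ : SLexLe w v₂) :
    u <:+ w := by
  rcases hw₁ with hv₁w | rfl
  · rcases hw₂ with hwv₂ | rfl
    · rw [← List.reverse_prefix] at h₁ h₂ ⊢
      exact h₁.of_lex_of_lex h₂ hv₁w hwv₂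
    · exact h₂
  · exact h₁
end

section
/- Let S be a finite set of strings over a linearly ordered alphabet Σ, let P be the set of all prefixes of strings of S including the empty string, and for p ∈ P let state(p) = |{q ∈ P : q <_slex p}| be its rank in P under the suffix-lexicographic order. For a nonempty p = p'++[c] ∈ P define pair(p) = (c, state(p')) (note p' ∈ P since P is prefix-closed). Then for all nonempty p, q ∈ P: p <_slex q if and only if pair(p) is lexicographically smaller than pair(q) (comparing first characters by the order of Σ, then second components as natural numbers); consequently the map pair is injective on the nonempty elements of P, and for every nonempty p ∈ P the number of nonempty q ∈ P with pair(q) lexicographically smaller than pair(p) equals state(p) − 1. -/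
/-- `stateRank P p` is the rank of `p` in `P` under the suffix-lexicographic order:
the number of elements of `P` that are suffix-lexicographically smaller than `p`. -/
noncomputable def stateRank {α : Type*} [LinearOrder α]
    (P : Finset (List α)) (p : List α) : ℕ :=
  {q : List α | q ∈ P ∧ SLex q p}.ncard

namespace SLex

variable {α : Type*} [LinearOrder α] {p q r : List α} {c d : α}

theorem trans (hpq : SLex p q) (hqr : SLex q r) : SLex p r :=
  List.lex_trans (fun h₁ h₂ => lt_trans h₁ h₂) hpq hqr

theorem irrefl (p : List α) : ¬ SLex p p :=
  irrefl_of (List.Lex (· < ·)) _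

theorem trichotomous (p q : List α) : SLex p q ∨ p = q ∨ SLex q p := by
  rcases trichotomous_of (List.Lex (· < ·)) p.reverse q.reverse with h | h | h
  · exact .inl h
  · exact .inr (.inl (List.reverse_injective h))
  · exact .inr (.inr h)

theorem append_singleton_iff :
    SLex (p ++ [c]) (q ++ [d]) ↔ c < d ∨ (c = d ∧ SLex p q) := by
  simp only [SLex, List.reverse_append, List.reverse_singleton, List.singleton_append]
  constructor
  · rintro (_ | h | h)
    exacts [.inl h, .inr ⟨rfl, h⟩]
  · rintro (h | ⟨rfl, h⟩)
    exacts [.rel h, .cons h]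

theorem nil_left_iff : SLex [] p ↔ p ≠ [] := by
  rcases List.eq_nil_or_concat' p with rfl | ⟨p', c, rfl⟩
  · exact iff_of_false (irrefl []) (by simp)
  · refine iff_of_true ?_ (List.concat_ne_nil c p')
    simp only [SLex, List.reverse_nil, List.reverse_append, List.reverse_singleton,
      List.singleton_append]
    exact .nil

end SLex

section stateRank

variable {α : Type*} [LinearOrder α] {P : Finset (List α)} {p q : List α}

theorem stateRank_lt_stateRank (hp : p ∈ P) (h : SLex p q) :
    stateRank P p < stateRank P q := by
  refine Set.ncard_lt_ncard ⟨fun r hr => ⟨hr.1, hr.2.trans h⟩, fun hsub => ?_⟩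
    (P.finite_toSet.subset fun _ hr => hr.1)
  exact SLex.irrefl p (hsub ⟨hp, h⟩).2

theorem stateRank_lt_stateRank_iff (hp : p ∈ P) (hq : q ∈ P) :
    stateRank P p < stateRank P q ↔ SLex p q := by
  refine ⟨fun h => ?_, stateRank_lt_stateRank hp⟩
  rcases SLex.trichotomous p q with hpq | rfl | hqp
  · exact hpq
  · exact absurd h (lt_irrefl _)
  · exact absurd h (stateRank_lt_stateRank hq hqp).asymm

theorem stateRank_injOn : Set.InjOn (stateRank P) P := by
  intro p hp q hq h
  rcases SLex.trichotomous p q with hpq | hpq | hqp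
  · exact absurd h (stateRank_lt_stateRank hp hpq).ne
  · exact hpq
  · exact absurd h (stateRank_lt_stateRank hq hqp).ne'

theorem ncard_setOf_ne_nil_slex_eq_stateRank_sub_one (hnil : [] ∈ P) (hp : p ≠ []) :
    {q | q ∈ P ∧ q ≠ [] ∧ SLex q p}.ncard = stateRank P p - 1 := by
  have hset : {q | q ∈ P ∧ q ≠ [] ∧ SLex q p} = {q | q ∈ P ∧ SLex q p} \ {[]} := by
    ext q
    simp only [Set.mem_ofPred_eq, Set.mem_sdiff, Set.mem_singleton_iff]
    tauto
  have hmem : [] ∈ {q | q ∈ P ∧ SLex q p} := ⟨hnil, SLex.nil_left_iff.2 hp⟩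
  rw [hset, Set.ncard_sdiff_singleton_of_mem hmem, stateRank]

end stateRank

theorem mem_of_append_singleton_mem {α : Type*} {S P : Finset (List α)}
    (hP : ∀ p : List α, p ∈ P ↔ p = [] ∨ ∃ s ∈ S, p <+: s) {p : List α} {c : α}
    (h : p ++ [c] ∈ P) : p ∈ P := by
  rcases (hP _).1 h with h | ⟨s, hs, hps⟩
  · simp at h
  · exact (hP _).2 (.inr ⟨s, hs, (List.prefix_append p [c]).trans hps⟩)

/-- Let `P` be the set of all prefixes of strings of a finite set `S`
(including the empty string), and for nonempty `p = p' ++ [c] ∈ P` let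
`pair p = (c, stateRank P p')`. Then the suffix-lexicographic order on nonempty
elements of `P` coincides with the lexicographic order on their pairs; consequently
`pair` is injective on nonempty elements of `P`, and for nonempty `p ∈ P` the number
of nonempty `q ∈ P` whose pair is lexicographically smaller than that of `p` equals
`stateRank P p − 1`. -/
theorem transition_dictionary_pairs {α : Type*} [LinearOrder α]
    (S : Finset (List α)) (P : Finset (List α))
    (hP : ∀ p : List α, p ∈ P ↔ p = [] ∨ ∃ s ∈ S, p <+: s) :
    (∀ p' q' : List α, ∀ c d : α, p' ++ [c] ∈ P → q' ++ [d] ∈ P →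
        (SLex (p' ++ [c]) (q' ++ [d]) ↔
          c < d ∨ (c = d ∧ stateRank P p' < stateRank P q'))) ∧
      (∀ p' q' : List α, ∀ c d : α, p' ++ [c] ∈ P → q' ++ [d] ∈ P →
        (c, stateRank P p') = (d, stateRank P q') → p' ++ [c] = q' ++ [d]) ∧
      (∀ p' : List α, ∀ c : α, p' ++ [c] ∈ P →
        {q : List α | q ∈ P ∧ ∃ q' : List α, ∃ d : α, q = q' ++ [d] ∧
            (d < c ∨ (d = c ∧ stateRank P q' < stateRank P p'))}.ncard =
          stateRank P (p' ++ [c]) - 1) := by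
  have pair_lt_iff : ∀ p' q' : List α, ∀ c d : α, p' ++ [c] ∈ P → q' ++ [d] ∈ P →
      (SLex (p' ++ [c]) (q' ++ [d]) ↔
        c < d ∨ (c = d ∧ stateRank P p' < stateRank P q')) := fun p' q' c d hp hq => by
    rw [SLex.append_singleton_iff, stateRank_lt_stateRank_iff
      (mem_of_append_singleton_mem hP hp) (mem_of_append_singleton_mem hP hq)]
  refine ⟨pair_lt_iff, fun p' q' c d hp hq hpair => ?_, fun p' c hp => ?_⟩
  · obtain ⟨rfl, hrank⟩ := Prod.mk.inj hpair
    rw [stateRank_injOn (mem_of_append_singleton_mem hP hp)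
      (mem_of_append_singleton_mem hP hq) hrank]
  · rw [← ncard_setOf_ne_nil_slex_eq_stateRank_sub_one ((hP []).2 (.inl rfl)) (List.concat_ne_nil c p')]
    congr 1
    ext q
    constructor
    · rintro ⟨hq, q', d, rfl, hlt⟩
      exact ⟨hq, List.concat_ne_nil d q', (pair_lt_iff q' p' d c hq hp).2 hlt⟩
    · rintro ⟨hq, hne, hlt⟩
      obtain ⟨q', d, rfl⟩ := (List.eq_nil_or_concat' q).resolve_left hne
      exact ⟨hq, q', d, rfl, (pair_lt_iff q' p' d c hq hp).1 hlt⟩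
end

section
/- Let P be a finite set of strings over an alphabet Σ that contains the empty string and is closed under taking prefixes. For a string w let φ(w) denote the longest suffix of w belonging to P. Then for every string w and every character c ∈ Σ: φ(w++[c]) = φ(φ(w)++[c]). -/
/-!
The longest suffix of a string lying in `P` is determined by which elements of `P` are suffixes
of that string. For prefix-closed `P`, the strings `w ++ [c]` and `φ w ++ [c]` have the same
suffixes in `P`: a nonempty one is `t ++ [c]` with `t ∈ P` a suffix of `w`, hence of `φ w`.
-/

section

variable {α : Type*}

structure IsLongestSuffixIn (P : Set (List α)) (w s : List α) : Prop where
  mem : s ∈ P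
  suffix : s <:+ w
  maximal : ∀ r ∈ P, r <:+ w → r <:+ s

namespace IsLongestSuffixIn

variable {P : Set (List α)} {u v w s t : List α}

theorem eq_of_forall_suffix_iff (hs : IsLongestSuffixIn P u s) (ht : IsLongestSuffixIn P v t)
    (huv : ∀ r ∈ P, r <:+ u ↔ r <:+ v) : s = t :=
  antisymm (ht.maximal s hs.mem ((huv s hs.mem).1 hs.suffix))
    (hs.maximal t ht.mem ((huv t ht.mem).2 ht.suffix))

theorem suffix_concat_iff (hclosed : ∀ p ∈ P, ∀ q : List α, q <+: p → q ∈ P)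
    (hs : IsLongestSuffixIn P w s) (c : α) {r : List α} (hr : r ∈ P) :
    r <:+ w ++ [c] ↔ r <:+ s ++ [c] := by
  refine ⟨fun hrw => ?_, fun hrs => hrs.trans (List.suffix_append_self_iff.2 hs.suffix)⟩
  obtain rfl | ⟨q, rfl, hqw⟩ := List.suffix_concat_iff.1 hrw
  · exact List.nil_suffix
  · have hqP : q ∈ P := hclosed _ hr q (List.prefix_append q [c])
    exact List.suffix_append_self_iff.2 (hs.maximal q hqP hqw)

end IsLongestSuffixIn

end

theorem aho_corasick_state_recursion_general {α : Type*}
    (P : Finset (List α))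
    (hclosed : ∀ p ∈ P, ∀ q : List α, q <+: p → q ∈ P)
    (φ : List α → List α)
    (hφ : ∀ w : List α, φ w ∈ P ∧ φ w <:+ w ∧ ∀ r ∈ P, r <:+ w → r <:+ φ w) :
    ∀ (w : List α) (c : α), φ (w ++ [c]) = φ (φ w ++ [c]) := by
  intro w c
  have hlongest (u : List α) : IsLongestSuffixIn (P : Set (List α)) u (φ u) :=
    ⟨(hφ u).1, (hφ u).2.1, (hφ u).2.2⟩
  exact (hlongest _).eq_of_forall_suffix_iff (hlongest _)
    fun _ hr => (hlongest w).suffix_concat_iff hclosed c hr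

/-- Let `P` be a finite, prefix-closed set of strings containing the
empty string, and let `φ w` be the longest suffix of `w` belonging to `P`. Then
`φ (w ++ [c]) = φ (φ w ++ [c])` for every string `w` and character `c`. -/
theorem aho_corasick_state_recursion {α : Type*}
    (P : Finset (List α)) (hnil : ([] : List α) ∈ P)
    (hclosed : ∀ p ∈ P, ∀ q : List α, q <+: p → q ∈ P)
    (φ : List α → List α)
    (hφ : ∀ w : List α, φ w ∈ P ∧ φ w <:+ w ∧ ∀ r ∈ P, r <:+ w → r <:+ φ w) :
    ∀ (w : List α) (c : α), φ (w ++ [c]) = φ (φ w ++ [c]) :=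
  aho_corasick_state_recursion_general P hclosed φ hφ
end

section
/- Let P be a finite set of strings over an alphabet Σ that contains the empty string and is closed under taking prefixes, and for a string w let φ(w) denote the longest suffix of w belonging to P; for nonempty p ∈ P let fail(p) denote the longest proper suffix of p belonging to P. Then for every p ∈ P and character c ∈ Σ: (i) if p++[c] ∈ P then φ(p++[c]) = p++[c]; (ii) if p++[c] ∉ P and p is nonempty then φ(p++[c]) = φ(fail(p)++[c]); (iii) if [c] ∉ P then φ([c]) is the empty string. -/
/-!
A suffix of `p ++ [c]` is either empty or `r ++ [c]` with `r` a suffix of `p`. If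
`r ++ [c] ∈ P` but `p ++ [c] ∉ P`, prefix-closedness puts `r` in `P` and forces `r ≠ p`,
so `r` is a suffix of `fail p`. Hence `p ++ [c]` and `fail p ++ [c]` have the same
suffixes in `P`, and therefore the same longest one.
-/

namespace List

variable {α : Type*}

def IsLongestSuffixIn (P : Set (List α)) (w s : List α) : Prop :=
  s ∈ P ∧ s <:+ w ∧ ∀ r ∈ P, r <:+ w → r <:+ s

namespace IsLongestSuffixIn

variable {P : Set (List α)} {w v s t : List α}

theorem unique (hs : IsLongestSuffixIn P w s) (ht : IsLongestSuffixIn P w t) : s = t :=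
  (ht.2.2 s hs.1 hs.2.1).eq_of_length_le (hs.2.2 t ht.1 ht.2.1).length_le

theorem eq_self_of_mem (hs : IsLongestSuffixIn P w s) (hw : w ∈ P) : s = w :=
  hs.2.1.eq_of_length_le (hs.2.2 w hw suffix_rfl).length_le

theorem of_suffixes_iff (hs : IsLongestSuffixIn P w s)
    (hwv : ∀ r ∈ P, r <:+ w ↔ r <:+ v) : IsLongestSuffixIn P v s :=
  ⟨hs.1, (hwv s hs.1).1 hs.2.1, fun r hr hrv => hs.2.2 r hr ((hwv r hr).2 hrv)⟩

theorem eq_nil_of_singleton_notMem {c : α} (hs : IsLongestSuffixIn P [c] s) (hc : [c] ∉ P) :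
    s = [] :=
  suffix_nil.1 <| (suffix_cons_iff.1 hs.2.1).resolve_left fun h => hc (h ▸ hs.1)

end IsLongestSuffixIn

theorem suffix_append_singleton_iff_of_notMem {P : Set (List α)}
    (hclosed : ∀ p ∈ P, ∀ q, q <+: p → q ∈ P) {p f : List α} {c : α}
    (hpc : p ++ [c] ∉ P) (hfp : f <:+ p) (hf : ∀ r ∈ P, r <:+ p → r ≠ p → r <:+ f) :
    ∀ r ∈ P, r <:+ p ++ [c] ↔ r <:+ f ++ [c] := by
  intro r hr
  refine ⟨fun h => ?_, fun h => h.trans (suffix_append_self_iff.2 hfp)⟩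
  obtain rfl | ⟨t, rfl, htp⟩ := suffix_concat_iff.1 h
  · exact nil_suffix
  have htP : t ∈ P := hclosed _ hr t (prefix_append t [c])
  have htne : t ≠ p := by
    rintro rfl
    exact hpc hr
  exact suffix_append_self_iff.2 (hf t htP htp htne)

end List

theorem aho_corasick_goto_failure_recursion_general {α : Type*}
    (P : Finset (List α))
    (hclosed : ∀ p ∈ P, ∀ q : List α, q <+: p → q ∈ P)
    (φ : List α → List α)
    (hφ : ∀ w : List α, φ w ∈ P ∧ φ w <:+ w ∧ ∀ r ∈ P, r <:+ w → r <:+ φ w)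
    (fail : List α → List α)
    (hfail : ∀ p ∈ P, p ≠ [] →
      fail p ∈ P ∧ fail p <:+ p ∧ fail p ≠ p ∧
        ∀ r ∈ P, r <:+ p → r ≠ p → r <:+ fail p) :
    (∀ p ∈ P, ∀ c : α, p ++ [c] ∈ P → φ (p ++ [c]) = p ++ [c]) ∧
      (∀ p ∈ P, ∀ c : α, p ++ [c] ∉ P → p ≠ [] →
        φ (p ++ [c]) = φ (fail p ++ [c])) ∧
      (∀ c : α, [c] ∉ P → φ [c] = []) := by
  have hlongest (w : List α) : List.IsLongestSuffixIn (P : Set (List α)) w (φ w) := hφ w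
  refine ⟨fun p _ c hpc => (hlongest _).eq_self_of_mem hpc,
    fun p hp c hpc hne => ?_, fun c hc => (hlongest [c]).eq_nil_of_singleton_notMem hc⟩
  obtain ⟨-, hfp, -, hf⟩ := hfail p hp hne
  exact ((hlongest _).of_suffixes_iff
    (List.suffix_append_singleton_iff_of_notMem hclosed hpc hfp hf)).unique (hlongest _)

/-- Let `P` be a finite, prefix-closed set of strings containing the
empty string, `φ w` the longest suffix of `w` belonging to `P`, and `fail p` the
longest proper suffix of a nonempty `p ∈ P` belonging to `P`. Then for `p ∈ P` and a
character `c`: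
(i) if `p ++ [c] ∈ P` then `φ (p ++ [c]) = p ++ [c]`;
(ii) if `p ++ [c] ∉ P` and `p ≠ []` then `φ (p ++ [c]) = φ (fail p ++ [c])`;
(iii) if `[c] ∉ P` then `φ [c] = []`. -/
theorem aho_corasick_goto_failure_recursion {α : Type*}
    (P : Finset (List α)) (hnil : ([] : List α) ∈ P)
    (hclosed : ∀ p ∈ P, ∀ q : List α, q <+: p → q ∈ P)
    (φ : List α → List α)
    (hφ : ∀ w : List α, φ w ∈ P ∧ φ w <:+ w ∧ ∀ r ∈ P, r <:+ w → r <:+ φ w)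
    (fail : List α → List α)
    (hfail : ∀ p ∈ P, p ≠ [] →
      fail p ∈ P ∧ fail p <:+ p ∧ fail p ≠ p ∧
        ∀ r ∈ P, r <:+ p → r ≠ p → r <:+ fail p) :
    (∀ p ∈ P, ∀ c : α, p ++ [c] ∈ P → φ (p ++ [c]) = p ++ [c]) ∧
      (∀ p ∈ P, ∀ c : α, p ++ [c] ∉ P → p ≠ [] →
        φ (p ++ [c]) = φ (fail p ++ [c])) ∧
      (∀ c : α, [c] ∉ P → φ [c] = []) :=
  aho_corasick_goto_failure_recursion_general P hclosed φ hφ fail hfail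
end

section
/- Let S be a finite set of nonempty strings over an alphabet Σ. Define the report relation R on strings by: R x y iff y ∈ S, y is a proper suffix of x, and every element of S that is a proper suffix of x is a suffix of y (i.e., y is the longest proper suffix of x belonging to S). Then for every string p and every string y: (y ∈ S and y is a proper suffix of p) if and only if the transitive closure of R relates p to y. (Following report transitions from p enumerates exactly the elements of S that are proper suffixes of p.) -/
/-!
Suffixes of a fixed string are totally ordered by the suffix relation, so among the proper
suffixes of `p` lying in the finite set `S` there is a longest one `z`, and all the others are
proper suffixes of `z`. Induction on the length of `p` then reaches every such suffix by report
transitions; conversely, being a proper suffix is transitive.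
-/

open Relation

theorem List.IsSuffix.length_lt_of_ne {α : Type*} {l₁ l₂ : List α} (h : l₁ <:+ l₂)
    (hne : l₁ ≠ l₂) : l₁.length < l₂.length :=
  lt_of_le_of_ne h.length_le (mt h.eq_of_length hne)

section LongestProperSuffix

variable {α : Type*} (S : Finset (List α))

def IsLongestProperSuffixIn (x z : List α) : Prop :=
  z ∈ S ∧ z <:+ x ∧ z ≠ x ∧ ∀ u ∈ S, u <:+ x → u ≠ x → u <:+ z

variable {S}

theorem exists_isLongestProperSuffixIn {p y : List α} (hy : y ∈ S) (hyp : y <:+ p)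
    (hne : y ≠ p) : ∃ z, IsLongestProperSuffixIn S p z := by
  classical
  obtain ⟨z, hz, hmax⟩ := (S.filter fun u => u <:+ p ∧ u ≠ p).exists_max_image List.length
    ⟨y, by simp [hy, hyp, hne]⟩
  rw [Finset.mem_filter] at hz
  exact ⟨z, hz.1, hz.2.1, hz.2.2, fun u hu hup hune =>
    List.suffix_of_suffix_length_le hup hz.2.1 (hmax u (by simp [hu, hup, hune]))⟩

theorem transGen_isLongestProperSuffixIn_of_mem {p y : List α} (hy : y ∈ S) (hyp : y <:+ p)
    (hne : y ≠ p) : TransGen (IsLongestProperSuffixIn S) p y := by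
  obtain ⟨z, hz⟩ := exists_isLongestProperSuffixIn hy hyp hne
  by_cases hyz : y = z
  · exact .single (hyz ▸ hz)
  · have : z.length < p.length := hz.2.1.length_lt_of_ne hz.2.2.1
    exact .head hz (transGen_isLongestProperSuffixIn_of_mem hy (hz.2.2.2 y hy hyp hne) hyz)
termination_by p.length

theorem Relation.TransGen.mem_properSuffix_of_isLongestProperSuffixIn {p y : List α}
    (h : TransGen (IsLongestProperSuffixIn S) p y) : y ∈ S ∧ y <:+ p ∧ y ≠ p := by
  induction h with
  | single h => exact ⟨h.1, h.2.1, h.2.2.1⟩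
  | tail _ hzy ih =>
    refine ⟨hzy.1, hzy.2.1.trans ih.2.1, ?_⟩
    rintro rfl
    exact ih.2.2 (ih.2.1.eq_of_length_le hzy.2.1.length_le)

end LongestProperSuffix

theorem report_transitions_correct_general {α : Type*}
    (S : Finset (List α)) :
    ∀ p y : List α,
      (y ∈ S ∧ y <:+ p ∧ y ≠ p) ↔
        Relation.TransGen
          (fun x z : List α => z ∈ S ∧ z <:+ x ∧ z ≠ x ∧
            ∀ u ∈ S, u <:+ x → u ≠ x → u <:+ z) p y :=
  fun _ _ => ⟨fun ⟨hy, hyp, hne⟩ => transGen_isLongestProperSuffixIn_of_mem hy hyp hne,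
    TransGen.mem_properSuffix_of_isLongestProperSuffixIn⟩

/-- Let `S` be a finite set of nonempty strings and define the report
relation `R x y` iff `y` is the longest proper suffix of `x` belonging to `S`. Then
for any strings `p` and `y`: `y ∈ S` and `y` is a proper suffix of `p` iff the
transitive closure of `R` relates `p` to `y`. -/
theorem report_transitions_correct {α : Type*}
    (S : Finset (List α)) (hS : ∀ s ∈ S, s ≠ ([] : List α)) :
    ∀ p y : List α,
      (y ∈ S ∧ y <:+ p ∧ y ≠ p) ↔
        Relation.TransGen
          (fun x z : List α => z ∈ S ∧ z <:+ x ∧ z ≠ x ∧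
            ∀ u ∈ S, u <:+ x → u ≠ x → u <:+ z) p y :=
  report_transitions_correct_general S
end

section
/- Let Σ be an alphabet, S a finite set of nonempty strings over Σ, and P the set of all prefixes of strings of S including the empty string (so P contains the empty string and is closed under taking prefixes). For a string w let φ(w) denote the longest suffix of w belonging to P, and let R be the relation defined by: R x y iff y ∈ S, y is a proper suffix of x, and every element of S that is a proper suffix of x is a suffix of y. Then for every text T (a string over Σ), every i ≤ |T|, and every string x, writing w for the prefix of T of length i: x ∈ S and x is a suffix of w, if and only if, (x = φ(w) and x ∈ S) or the transitive closure of R relates φ(w) to x. (The Aho-Corasick query on T reports exactly the occurrences of strings of S ending at each position of T.) -/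
/-!
Every string of `S` that is a suffix of `w` lies in `P`, hence is a suffix of `φ w`; so the
strings of `S` ending in `w` are those ending in `φ w`. The suffixes of a string are totally
ordered by the suffix relation, so the report relation sends `u` to the longest proper suffix of
`u` in `S`, and iterating it from `u` visits every proper suffix of `u` in `S`, in order of
decreasing length.
-/

namespace AhoCorasick

open Relation

variable {α : Type*}

def ReportRel (S : Finset (List α)) (u v : List α) : Prop :=
  v ∈ S ∧ v <:+ u ∧ v ≠ u ∧ ∀ z ∈ S, z <:+ u → z ≠ u → z <:+ v

theorem length_lt_of_isSuffix_of_ne {l₁ l₂ : List α} (h : l₁ <:+ l₂) (hne : l₁ ≠ l₂) :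
    l₁.length < l₂.length :=
  h.length_le.lt_of_ne fun hl => hne (h.eq_of_length hl)

variable {S : Finset (List α)} {x : List α}

theorem exists_reportRel {u : List α} (hx : x ∈ S) (hxu : x <:+ u) (hne : x ≠ u) :
    ∃ v, ReportRel S u v := by
  classical
  obtain ⟨v, hv, hvmax⟩ := Finset.exists_max_image (S.filter fun v => v <:+ u ∧ v ≠ u)
    List.length ⟨x, by simp [hx, hxu, hne]⟩
  simp only [Finset.mem_filter] at hv
  refine ⟨v, hv.1, hv.2.1, hv.2.2, fun z hz hzu hzne => ?_⟩
  rcases List.suffix_or_suffix_of_suffix hzu hv.2.1 with hzv | hvz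
  · exact hzv
  · have hvz_eq : v = z := hvz.eq_of_length_le (hvmax z (by simp [hz, hzu, hzne]))
    exact hvz_eq ▸ List.suffix_rfl

theorem transGen_reportRel_of_isSuffix {u : List α} (hx : x ∈ S) (hxu : x <:+ u) (hne : x ≠ u) :
    TransGen (ReportRel S) u x := by
  obtain ⟨v, hv⟩ := exists_reportRel hx hxu hne
  by_cases hvx : v = x
  · exact .single (hvx ▸ hv)
  · have : v.length < u.length := length_lt_of_isSuffix_of_ne hv.2.1 hv.2.2.1
    exact .head hv (transGen_reportRel_of_isSuffix hx (hv.2.2.2 x hx hxu hne) (Ne.symm hvx))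
termination_by u.length

theorem transGen_reportRel_iff {u : List α} : TransGen (ReportRel S) u x ↔ x ∈ S ∧ x <:+ u ∧ x ≠ u := by
  refine ⟨fun h => ?_, fun ⟨hx, hxu, hne⟩ => transGen_reportRel_of_isSuffix hx hxu hne⟩
  induction h with
  | single h => exact ⟨h.1, h.2.1, h.2.2.1⟩
  | @tail v x _ hvx ih =>
    refine ⟨hvx.1, hvx.2.1.trans ih.2.1, ?_⟩
    rintro rfl
    exact ih.2.2 (ih.2.1.eq_of_length_le hvx.2.1.length_le)

theorem mem_and_isSuffix_iff {w f : List α} (hfw : f <:+ w)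
    (hmax : ∀ s ∈ S, s <:+ w → s <:+ f) :
    x ∈ S ∧ x <:+ w ↔ (x = f ∧ x ∈ S) ∨ TransGen (ReportRel S) f x := by
  rw [transGen_reportRel_iff]
  constructor
  · rintro ⟨hx, hxw⟩
    by_cases h : x = f
    · exact .inl ⟨h, hx⟩
    · exact .inr ⟨hx, hmax x hx hxw, h⟩
  · rintro (⟨rfl, hx⟩ | ⟨hx, hxf, -⟩)
    · exact ⟨hx, hfw⟩
    · exact ⟨hx, hxf.trans hfw⟩

end AhoCorasick

theorem aho_corasick_query_correct_general {α : Type*}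
    (S : Finset (List α))
    (P : Finset (List α))
    (hP : ∀ p : List α, p ∈ P ↔ p = [] ∨ ∃ s ∈ S, p <+: s)
    (φ : List α → List α)
    (hφ : ∀ w : List α, φ w ∈ P ∧ φ w <:+ w ∧ ∀ r ∈ P, r <:+ w → r <:+ φ w) :
    ∀ (T : List α) (i : ℕ), i ≤ T.length → ∀ x : List α,
      (x ∈ S ∧ x <:+ T.take i) ↔
        ((x = φ (T.take i) ∧ x ∈ S) ∨
          Relation.TransGen
            (fun u v : List α => v ∈ S ∧ v <:+ u ∧ v ≠ u ∧
              ∀ z ∈ S, z <:+ u → z ≠ u → z <:+ v)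
            (φ (T.take i)) x) := by
  intro T i _ x
  obtain ⟨-, hsuffix, hmax⟩ := hφ (T.take i)
  exact AhoCorasick.mem_and_isSuffix_iff hsuffix
    (fun s hs => hmax s ((hP s).2 (.inr ⟨s, hs, List.prefix_rfl⟩)))

/-- Let `S` be a finite set of nonempty strings, `P` the set of all
prefixes of strings of `S` (including the empty string), `φ w` the longest suffix of
`w` belonging to `P`, and `R` the report relation (`R x y` iff `y` is the longest
proper suffix of `x` belonging to `S`). Then for every text `T`, every `i ≤ |T|` and
every string `x`, with `w` the prefix of `T` of length `i`: `x ∈ S` and `x` is a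
suffix of `w`, iff `x = φ w ∧ x ∈ S`, or the transitive closure of `R` relates
`φ w` to `x`. (The Aho–Corasick query reports exactly the occurrences of strings of
`S` ending at each position of `T`.) -/
theorem aho_corasick_query_correct {α : Type*}
    (S : Finset (List α)) (hS : ∀ s ∈ S, s ≠ ([] : List α))
    (P : Finset (List α))
    (hP : ∀ p : List α, p ∈ P ↔ p = [] ∨ ∃ s ∈ S, p <+: s)
    (φ : List α → List α)
    (hφ : ∀ w : List α, φ w ∈ P ∧ φ w <:+ w ∧ ∀ r ∈ P, r <:+ w → r <:+ φ w) :
    ∀ (T : List α) (i : ℕ), i ≤ T.length → ∀ x : List α,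
      (x ∈ S ∧ x <:+ T.take i) ↔
        ((x = φ (T.take i) ∧ x ∈ S) ∨
          Relation.TransGen
            (fun u v : List α => v ∈ S ∧ v <:+ u ∧ v ≠ u ∧
              ∀ z ∈ S, z <:+ u → z ≠ u → z <:+ v)
            (φ (T.take i)) x) :=
  aho_corasick_query_correct_general S P hP φ hφ
end
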